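/- arXiv:2505.17577 — 4 statements merged into one kernel-verified Lean document; each statement's English description precedes it below -/
import Mathlib

section
/- Let X : [0,T] → ℝ≥0 be continuous with X² differentiable, c ≥ 0, and A : [0,T] → ℝ≥0 measurable with (1/2)(d/dt)X² + cX² ≤ A·X almost everywhere on [0,T]. Then for all t ∈ [0,T], X(t) + c∫₀ᵗ X(τ)dτ ≤ X(0) + ∫₀ᵗ A(τ)dτ. -/
open MeasureTheory Set
open scoped Interval

/-!
Where `X > 0`, the hypothesis says `X' + c X ≤ A`, and integrating gives the claim. To cope with
the zeros of `X`, integrate instead the derivative of the regularization `√(X² + ε²)`, which is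
`(X²)' / (2 √(X² + ε²)) ≤ A - c X + c ε`, by the one-sided fundamental theorem of calculus, and
let `ε → 0`.
-/

lemma div_two_mul_le_sub_add {x s ε a c d : ℝ} (hx : 0 ≤ x) (ha : 0 ≤ a) (hc : 0 ≤ c)
    (hs : 0 < s) (hxs : x ≤ s) (hsx : s ≤ x + ε) (hd : (1 / 2) * d + c * x ^ 2 ≤ a * x) :
    d / (2 * s) ≤ a - c * x + c * ε := by
  rw [div_le_iff₀ (by positivity)]
  nlinarith [mul_nonneg ha (sub_nonneg.2 hxs), mul_nonneg (mul_nonneg hc hx) (sub_nonneg.2 hsx),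
    mul_nonneg (mul_nonneg hc (hx.trans hxs)) (sub_nonneg.2 hxs)]

lemma sqrt_sq_add_sq_le_add {x ε : ℝ} (hx : 0 ≤ x) (hε : 0 ≤ ε) : √(x ^ 2 + ε ^ 2) ≤ x + ε :=
  (Real.sqrt_le_left (by positivity)).2 (by nlinarith [mul_nonneg hx hε])

section

variable {X A D : ℝ → ℝ} {a b c ε : ℝ}

theorem sqrt_sq_add_sq_sub_le_integral (hab : a ≤ b) (hc : 0 ≤ c) (hε : 0 < ε)
    (hXcont : ContinuousOn X (Icc a b)) (hXpos : ∀ t ∈ Icc a b, 0 ≤ X t)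
    (hderiv : ∀ t ∈ Ioo a b, HasDerivAt (fun s => X s ^ 2) (D t) t)
    (hApos : ∀ t ∈ Icc a b, 0 ≤ A t) (hAint : IntervalIntegrable A volume a b)
    (hineq : ∀ᵐ t, t ∈ Icc a b → (1 / 2) * D t + c * X t ^ 2 ≤ A t * X t) :
    √(X b ^ 2 + ε ^ 2) - √(X a ^ 2 + ε ^ 2) ≤ ∫ t in a..b, (A t - c * X t + c * ε) := by
  set B : ℝ → ℝ := fun t => A t - c * X t + c * ε
  set g' : ℝ → ℝ := fun t => D t / (2 * √(X t ^ 2 + ε ^ 2))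
  have hB : IntervalIntegrable B volume a b :=
    (hAint.sub ((hXcont.intervalIntegrable_of_Icc hab).const_mul c)).add intervalIntegrable_const
  -- `max g' B` dominates `g'` everywhere, as the one-sided FTC requires, and is `B` a.e.
  have hg'B : ∀ᵐ t, t ∈ Ι a b → max (g' t) (B t) = B t := by
    filter_upwards [hineq] with t ht hmem
    have hmem : t ∈ Icc a b := Ioc_subset_Icc_self (uIoc_of_le hab ▸ hmem)
    exact max_eq_right <| div_two_mul_le_sub_add (hXpos t hmem) (hApos t hmem) hc
      (by positivity) (Real.le_sqrt_of_sq_le (by nlinarith))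
      (sqrt_sq_add_sq_le_add (hXpos t hmem) hε.le) (ht hmem)
  calc √(X b ^ 2 + ε ^ 2) - √(X a ^ 2 + ε ^ 2) ≤ ∫ t in a..b, max (g' t) (B t) :=
        intervalIntegral.sub_le_integral_of_hasDeriv_right_of_le hab
          (by fun_prop (disch := intro; positivity))
          (fun t ht => (((hderiv t ht).add_const _).sqrt (by positivity)).hasDerivWithinAt)
          ((intervalIntegrable_iff_integrableOn_Icc_of_le hab).1 <|
            hB.congr_ae (((ae_restrict_iff' measurableSet_uIoc).2 hg'B).mono fun _ h => h.symm))
          (fun t _ => le_max_left _ _)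
    _ = ∫ t in a..b, B t := intervalIntegral.integral_congr_ae hg'B

theorem add_mul_integral_le_add_integral_add (hab : a ≤ b) (hc : 0 ≤ c) (hε : 0 < ε)
    (hXcont : ContinuousOn X (Icc a b)) (hXpos : ∀ t ∈ Icc a b, 0 ≤ X t)
    (hderiv : ∀ t ∈ Ioo a b, HasDerivAt (fun s => X s ^ 2) (D t) t)
    (hApos : ∀ t ∈ Icc a b, 0 ≤ A t) (hAint : IntervalIntegrable A volume a b)
    (hineq : ∀ᵐ t, t ∈ Icc a b → (1 / 2) * D t + c * X t ^ 2 ≤ A t * X t) :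
    X b + c * ∫ t in a..b, X t ≤ X a + (∫ t in a..b, A t) + ε * (1 + c * (b - a)) := by
  have hX : IntervalIntegrable X volume a b := hXcont.intervalIntegrable_of_Icc hab
  have hsqrt := sqrt_sq_add_sq_sub_le_integral hab hc hε hXcont hXpos hderiv hApos hAint hineq
  rw [intervalIntegral.integral_add (hAint.sub (hX.const_mul c)) intervalIntegrable_const,
    intervalIntegral.integral_sub hAint (hX.const_mul c), intervalIntegral.integral_const_mul,
    intervalIntegral.integral_const, smul_eq_mul] at hsqrt
  have hXb : X b ≤ √(X b ^ 2 + ε ^ 2) := Real.le_sqrt_of_sq_le (by nlinarith)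
  have hXa := sqrt_sq_add_sq_le_add (hXpos a ⟨le_rfl, hab⟩) hε.le
  linarith

theorem add_mul_integral_le_add_integral (hab : a ≤ b) (hc : 0 ≤ c)
    (hXcont : ContinuousOn X (Icc a b)) (hXpos : ∀ t ∈ Icc a b, 0 ≤ X t)
    (hderiv : ∀ t ∈ Ioo a b, HasDerivAt (fun s => X s ^ 2) (D t) t)
    (hApos : ∀ t ∈ Icc a b, 0 ≤ A t) (hAint : IntervalIntegrable A volume a b)
    (hineq : ∀ᵐ t, t ∈ Icc a b → (1 / 2) * D t + c * X t ^ 2 ≤ A t * X t) :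
    X b + c * ∫ t in a..b, X t ≤ X a + ∫ t in a..b, A t := by
  have hK : 0 < 1 + c * (b - a) := by nlinarith [mul_nonneg hc (sub_nonneg.2 hab)]
  refine le_of_forall_pos_le_add fun δ hδ => ?_
  simpa only [div_mul_cancel₀ δ hK.ne'] using add_mul_integral_le_add_integral_add hab hc
    (div_pos hδ hK) hXcont hXpos hderiv hApos hAint hineq

end

theorem stmt_0_general (T : ℝ) (c : ℝ) (hc : 0 ≤ c)
    (X A D : ℝ → ℝ)
    (hXcont : ContinuousOn X (Icc 0 T))
    (hXpos : ∀ t ∈ Icc 0 T, 0 ≤ X t)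
    (hderiv : ∀ t ∈ Icc 0 T, HasDerivAt (fun s => X s ^ 2) (D t) t)
    (hApos : ∀ t ∈ Icc 0 T, 0 ≤ A t)
    (hAint : IntervalIntegrable A volume 0 T)
    (hineq : ∀ᵐ t, t ∈ Icc 0 T → (1/2) * D t + c * X t ^ 2 ≤ A t * X t) :
    ∀ t ∈ Icc 0 T,
      X t + c * ∫ τ in (0:ℝ)..t, X τ ≤ X 0 + ∫ τ in (0:ℝ)..t, A τ := by
  rintro t ⟨ht0, htT⟩
  have hsub : Icc 0 t ⊆ Icc 0 T := Icc_subset_Icc_right htT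
  exact add_mul_integral_le_add_integral ht0 hc (hXcont.mono hsub) (fun s hs => hXpos s (hsub hs))
    (fun s hs => hderiv s (hsub (Ioo_subset_Icc_self hs))) (fun s hs => hApos s (hsub hs))
    (hAint.mono_set (by rwa [uIcc_of_le ht0, uIcc_of_le (ht0.trans htT)]))
    (hineq.mono fun s hs hst => hs (hsub hst))

/-- ODE Lemma: if `X ≥ 0` is continuous on `[0,T]`, `X²` is differentiable with
derivative `D`, and `(1/2) D + c X² ≤ A X` a.e. on `[0,T]` with `A ≥ 0` measurable
(and integrable), then `X t + c ∫₀ᵗ X ≤ X 0 + ∫₀ᵗ A` for all `t ∈ [0,T]`. -/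
theorem stmt_0 (T : ℝ) (hT : 0 < T) (c : ℝ) (hc : 0 ≤ c)
    (X A D : ℝ → ℝ)
    (hXcont : ContinuousOn X (Icc 0 T))
    (hXpos : ∀ t ∈ Icc 0 T, 0 ≤ X t)
    (hderiv : ∀ t ∈ Icc 0 T, HasDerivAt (fun s => X s ^ 2) (D t) t)
    (hAmeas : Measurable A)
    (hApos : ∀ t ∈ Icc 0 T, 0 ≤ A t)
    (hAint : IntervalIntegrable A volume 0 T)
    (hineq : ∀ᵐ t, t ∈ Icc 0 T → (1/2) * D t + c * X t ^ 2 ≤ A t * X t) :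
    ∀ t ∈ Icc 0 T,
      X t + c * ∫ τ in (0:ℝ)..t, X τ ≤ X 0 + ∫ τ in (0:ℝ)..t, A τ :=
  stmt_0_general T c hc X A D hXcont hXpos hderiv hApos hAint hineq
end

section
/- Let T > 0, c > 0, C > 0, and let L, H : [0,T] → ℝ be continuous nonnegative functions such that L(0) < c/(2C) and for all t ∈ [0,T], L(t) + c∫₀ᵗ H(τ)dτ ≤ L(0) + C∫₀ᵗ L(τ)H(τ)dτ. Then for all t ∈ [0,T], L(t) + (c/2)∫₀ᵗ H(τ)dτ ≤ L(0). -/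
/-!
Let `b = c / (2C)`. As long as `L ≤ b` on `[0, t)`, the hypothesis gives
`L t + c ∫₀ᵗ H ≤ L 0 + C b ∫₀ᵗ H = L 0 + (c/2) ∫₀ᵗ H`, which is the claimed bound at `t` and,
since `L 0 < b`, even forces `L t < b`. A first-hitting-time argument for the closed set
`{t | b ≤ L t}` therefore shows `L < b` on all of `[0, T]`.
-/

open MeasureTheory Set

theorem ContinuousOn.forall_lt_of_forall_Ico_lt {α β : Type*}
    [ConditionallyCompleteLinearOrder α] [TopologicalSpace α] [OrderTopology α]
    [LinearOrder β] [TopologicalSpace β] [OrderClosedTopology β]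
    {f : α → β} {a T : α} {b : β} (hf : ContinuousOn f (Icc a T))
    (hstep : ∀ t ∈ Icc a T, (∀ s ∈ Ico a t, f s < b) → f t < b) :
    ∀ t ∈ Icc a T, f t < b := by
  by_contra! hbad
  set K := Icc a T ∩ f ⁻¹' Ici b
  have hK : IsClosed K := hf.preimage_isClosed_of_isClosed isClosed_Icc isClosed_Ici
  have hKne : K.Nonempty := hbad
  have hKbdd : BddBelow K := ⟨a, fun t ht => ht.1.1⟩
  have hmem : sInf K ∈ K := hK.csInf_mem hKne hKbdd
  refine (hstep _ hmem.1 fun s hs => ?_).not_ge hmem.2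
  by_contra! hbs
  exact hs.2.not_ge (csInf_le hKbdd ⟨⟨hs.1, hs.2.le.trans hmem.1.2⟩, hbs⟩)

theorem intervalIntegral.integral_mul_le_const_mul_of_le_Ico {f g : ℝ → ℝ} {a t b : ℝ}
    (hat : a ≤ t) (hfg : IntervalIntegrable (fun s => f s * g s) volume a t)
    (hg : IntervalIntegrable g volume a t) (hg0 : ∀ s ∈ Ioo a t, 0 ≤ g s)
    (hfb : ∀ s ∈ Ico a t, f s ≤ b) :
    ∫ s in a..t, f s * g s ≤ b * ∫ s in a..t, g s := by
  rw [← intervalIntegral.integral_const_mul]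
  refine intervalIntegral.integral_mono_on_of_le_Ioo hat hfg (hg.const_mul b) fun s hs => ?_
  exact mul_le_mul_of_nonneg_right (hfb s (Ioo_subset_Ico_self hs)) (hg0 s hs)

theorem stmt_1_general (T c C : ℝ) (hc : 0 < c) (hC : 0 < C)
    (L H : ℝ → ℝ)
    (hLcont : ContinuousOn L (Icc 0 T)) (hHcont : ContinuousOn H (Icc 0 T))
    (hHpos : ∀ t ∈ Icc 0 T, 0 ≤ H t)
    (hL0 : L 0 < c / (2 * C))
    (hineq : ∀ t ∈ Icc 0 T,
      L t + c * ∫ τ in (0:ℝ)..t, H τ ≤ L 0 + C * ∫ τ in (0:ℝ)..t, L τ * H τ) :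
    ∀ t ∈ Icc 0 T, L t + (c / 2) * ∫ τ in (0:ℝ)..t, H τ ≤ L 0 := by
  have hCb : C * (c / (2 * C)) = c / 2 := by field_simp
  have hH0 : ∀ t ∈ Icc 0 T, 0 ≤ ∫ τ in (0:ℝ)..t, H τ := fun t ht =>
    intervalIntegral.integral_nonneg ht.1 fun s hs => hHpos s ⟨hs.1, hs.2.trans ht.2⟩
  have hbound : ∀ t ∈ Icc 0 T, (∀ s ∈ Ico 0 t, L s ≤ c / (2 * C)) →
      L t + (c / 2) * ∫ τ in (0:ℝ)..t, H τ ≤ L 0 := by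
    intro t ht hLb
    have hsub : uIcc 0 t ⊆ Icc 0 T := by
      rw [uIcc_of_le ht.1]; exact Icc_subset_Icc_right ht.2
    have hLH := intervalIntegral.integral_mul_le_const_mul_of_le_Ico ht.1
      ((hLcont.mul hHcont).mono hsub).intervalIntegrable (hHcont.mono hsub).intervalIntegrable
      (fun s hs => hHpos s ⟨hs.1.le, hs.2.le.trans ht.2⟩) hLb
    have hCLH := mul_le_mul_of_nonneg_left hLH hC.le
    rw [← mul_assoc, hCb] at hCLH
    linarith [hineq t ht]
  have hlt : ∀ t ∈ Icc 0 T, L t < c / (2 * C) :=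
    hLcont.forall_lt_of_forall_Ico_lt fun t ht hLb => by
      linarith [hbound t ht fun s hs => (hLb s hs).le, mul_nonneg (half_pos hc).le (hH0 t ht)]
  exact fun t ht => hbound t ht fun s hs => (hlt s ⟨hs.1, hs.2.le.trans ht.2⟩).le

/-- Bootstrap lemma: if `L, H ≥ 0` are continuous on `[0,T]`, `L 0 < c/(2C)` and
`L t + c ∫₀ᵗ H ≤ L 0 + C ∫₀ᵗ L H` for all `t ∈ [0,T]`, then
`L t + (c/2) ∫₀ᵗ H ≤ L 0` on `[0,T]`. -/
theorem stmt_1 (T c C : ℝ) (hT : 0 < T) (hc : 0 < c) (hC : 0 < C)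
    (L H : ℝ → ℝ)
    (hLcont : ContinuousOn L (Icc 0 T)) (hHcont : ContinuousOn H (Icc 0 T))
    (hLpos : ∀ t ∈ Icc 0 T, 0 ≤ L t) (hHpos : ∀ t ∈ Icc 0 T, 0 ≤ H t)
    (hL0 : L 0 < c / (2 * C))
    (hineq : ∀ t ∈ Icc 0 T,
      L t + c * ∫ τ in (0:ℝ)..t, H τ ≤ L 0 + C * ∫ τ in (0:ℝ)..t, L τ * H τ) :
    ∀ t ∈ Icc 0 T, L t + (c / 2) * ∫ τ in (0:ℝ)..t, H τ ≤ L 0 :=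
  stmt_1_general T c C hc hC L H hLcont hHcont hHpos hL0 hineq
end

section
/- Let β > 0 and c₀ > 0 and c > 0. Then there exists a constant C, depending only on β, c₀, and c, such that for all t ≥ 0: ∫₀ᵗ ((1 + c₀t)/(1 + c₀τ))^β · e^{-c(t-τ)} dτ ≤ C. -/
/-!
The ratio `(1 + c₀ t) / (1 + c₀ τ)` is at most `1 + c₀ (t - τ)`, and a power of a linear function
of `s = t - τ` is dominated by a constant times `e^{c s / 2}`. Hence the integrand is at most
`K e^{-c (t - τ) / 2}`, whose integral over `[0, t]` is bounded by `2 K / c` uniformly in `t`.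
-/

open MeasureTheory Real

lemma integral_exp_neg_mul_sub_le {k : ℝ} (hk : 0 < k) (t : ℝ) :
    ∫ τ in (0:ℝ)..t, exp (-k * (t - τ)) ≤ 1 / k := by
  have hsplit : ∀ τ, exp (-k * (t - τ)) = exp (-k * t) * exp (k * τ) := fun τ => by
    rw [← exp_add]; ring_nf
  calc ∫ τ in (0:ℝ)..t, exp (-k * (t - τ))
      = exp (-k * t) * (k⁻¹ * (exp (k * t) - 1)) := by
        simp only [hsplit, intervalIntegral.integral_const_mul,
          intervalIntegral.integral_comp_mul_left (fun x => exp x) hk.ne', integral_exp,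
          mul_zero, exp_zero, smul_eq_mul]
    _ = (1 - exp (-k * t)) / k := by
        rw [neg_mul, exp_neg]
        field_simp
    _ ≤ 1 / k := by gcongr; linarith [exp_pos (-k * t)]

lemma div_one_add_mul_le_one_add_mul_sub {a τ t : ℝ} (ha : 0 ≤ a) (hτ : 0 ≤ τ) (hτt : τ ≤ t) :
    (1 + a * t) / (1 + a * τ) ≤ 1 + a * (t - τ) := by
  rw [div_le_iff₀ (by positivity)]
  nlinarith [mul_nonneg (mul_nonneg ha hτ) (mul_nonneg ha (sub_nonneg.2 hτt))]

lemma one_add_mul_le_mul_exp {a ε s : ℝ} (ha : 0 ≤ a) (hε : 0 < ε) (hs : 0 ≤ s) :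
    1 + a * s ≤ (1 + a / ε) * exp (ε * s) := by
  have h1 : 1 ≤ exp (ε * s) := one_le_exp (by positivity)
  have h2 : ε * s ≤ exp (ε * s) := by linarith [add_one_le_exp (ε * s)]
  calc 1 + a * s = 1 + a / ε * (ε * s) := by field_simp
    _ ≤ exp (ε * s) + a / ε * exp (ε * s) := by gcongr
    _ = (1 + a / ε) * exp (ε * s) := by ring

lemma rpow_div_mul_exp_le {β c₀ c τ t : ℝ} (hβ : 0 < β) (hc₀ : 0 ≤ c₀) (hc : 0 < c)
    (hτ : 0 ≤ τ) (hτt : τ ≤ t) :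
    ((1 + c₀ * t) / (1 + c₀ * τ)) ^ β * exp (-c * (t - τ))
      ≤ (1 + c₀ / (c / (2 * β))) ^ β * exp (-(c / 2) * (t - τ)) := by
  have ht : 0 ≤ t := hτ.trans hτt
  have hratio := (div_one_add_mul_le_one_add_mul_sub hc₀ hτ hτt).trans
    (one_add_mul_le_mul_exp hc₀ (by positivity : 0 < c / (2 * β)) (sub_nonneg.2 hτt))
  calc ((1 + c₀ * t) / (1 + c₀ * τ)) ^ β * exp (-c * (t - τ))
      ≤ ((1 + c₀ / (c / (2 * β))) * exp (c / (2 * β) * (t - τ))) ^ β * exp (-c * (t - τ)) := by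
        gcongr
    _ = (1 + c₀ / (c / (2 * β))) ^ β * exp (-(c / 2) * (t - τ)) := by
        rw [mul_rpow (by positivity) (exp_nonneg _), ← exp_mul, mul_assoc, ← exp_add]
        congr 2
        field_simp
        ring

lemma continuousOn_rpow_div_mul_exp {β c₀ c t : ℝ} (hβ : 0 ≤ β) (hc₀ : 0 ≤ c₀) :
    ContinuousOn (fun τ => ((1 + c₀ * t) / (1 + c₀ * τ)) ^ β * exp (-c * (t - τ)))
      (Set.Ici 0) := by
  refine ContinuousOn.mul ?_ (by fun_prop)
  refine ContinuousOn.rpow_const ?_ fun _ _ => Or.inr hβ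
  exact continuousOn_const.div (by fun_prop) fun τ (hτ : 0 ≤ τ) => by positivity

/-- For `β, c₀, c > 0` there is a constant `C` (depending only on them) such that
`∫₀ᵗ ((1+c₀t)/(1+c₀τ))^β e^{-c(t-τ)} dτ ≤ C` for all `t ≥ 0`. -/
theorem stmt_2 (β c₀ c : ℝ) (hβ : 0 < β) (hc₀ : 0 < c₀) (hc : 0 < c) :
    ∃ C : ℝ, 0 < C ∧ ∀ t : ℝ, 0 ≤ t →
      (∫ τ in (0:ℝ)..t,
        ((1 + c₀ * t) / (1 + c₀ * τ)) ^ β * Real.exp (-c * (t - τ))) ≤ C := by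
  set K := (1 + c₀ / (c / (2 * β))) ^ β
  refine ⟨K * (1 / (c / 2)), by positivity, fun t ht => ?_⟩
  have hIcc : Set.uIcc 0 t ⊆ Set.Ici 0 := by
    rw [Set.uIcc_of_le ht]; exact Set.Icc_subset_Ici_self
  calc (∫ τ in (0:ℝ)..t, ((1 + c₀ * t) / (1 + c₀ * τ)) ^ β * exp (-c * (t - τ)))
      ≤ ∫ τ in (0:ℝ)..t, K * exp (-(c / 2) * (t - τ)) :=
        intervalIntegral.integral_mono_on ht
          ((continuousOn_rpow_div_mul_exp hβ.le hc₀.le).mono hIcc).intervalIntegrable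
          (by apply Continuous.intervalIntegrable; fun_prop)
          fun τ hτ => rpow_div_mul_exp_le hβ hc₀.le hc hτ.1 hτ.2
    _ = K * ∫ τ in (0:ℝ)..t, exp (-(c / 2) * (t - τ)) := intervalIntegral.integral_const_mul _ _
    _ ≤ K * (1 / (c / 2)) := by gcongr; exact integral_exp_neg_mul_sub_le (by positivity) t
end

section
/- Suppose w solves ∂ₜw + (w·∇)w + w - u = 0 on [0,T]×ℝᵈ with w smooth and decaying, w(0) = w₀. Then for each j ∈ ℤ, the dyadic block wⱼ = Δ̇ⱼw satisfies ‖wⱼ(t)‖_{L²} + ∫₀ᵗ ‖wⱼ‖_{L²}dτ ≤ ‖Δ̇ⱼw₀‖_{L²} + ∫₀ᵗ ‖[Δ̇ⱼ, w·∇]w‖_{L²}dτ + ∫₀ᵗ ‖div w‖_{L∞}‖wⱼ‖_{L²}dτ + ∫₀ᵗ ‖uⱼ‖_{L²}dτ. -/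
open MeasureTheory Set

/-!
Pairing the block equation with `wⱼ` and using the transport bound gives
`⟪wⱼ', wⱼ⟫ + ‖wⱼ‖² ≤ A ‖wⱼ‖` with `A = ‖div w‖_{L∞} ‖wⱼ‖ + ‖uⱼ‖ + ‖[Δ̇ⱼ, w·∇]w‖`.
Dividing by `‖wⱼ‖` would give `X' + X ≤ A` for `X = ‖wⱼ‖`, but `X` need not be differentiable
where `wⱼ` vanishes; so one differentiates `√(‖wⱼ‖² + ε²)` instead, integrates, and lets `ε → 0`.
-/

section DampedEnergy

variable {H : Type*} [NormedAddCommGroup H] [InnerProductSpace ℝ H]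

theorem hasDerivAt_sqrt_norm_sq_add_sq {f : ℝ → H} {f' : H} {s : ℝ} (hf : HasDerivAt f f' s)
    {ε : ℝ} (hε : ε ≠ 0) :
    HasDerivAt (fun r => √(‖f r‖ ^ 2 + ε ^ 2)) (inner ℝ f' (f s) / √(‖f s‖ ^ 2 + ε ^ 2)) s := by
  have hpos : 0 < ‖f s‖ ^ 2 + ε ^ 2 := by positivity
  convert (hf.norm_sq.add_const (ε ^ 2)).sqrt hpos.ne' using 1
  rw [real_inner_comm]
  field_simp

-- the `ε`-regularization of `y / x ≤ a - x`
theorem div_sqrt_sq_add_sq_le {x y a ε : ℝ} (hx : 0 ≤ x) (hε : 0 < ε) (ha : 0 ≤ a)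
    (hy : y ≤ a * x - x ^ 2) : y / √(x ^ 2 + ε ^ 2) ≤ a - x + ε := by
  set S := √(x ^ 2 + ε ^ 2)
  have hS : 0 < S := Real.sqrt_pos.2 (by positivity)
  have hxS : x ≤ S := Real.le_sqrt_of_sq_le (by nlinarith)
  have hSx : S ≤ x + ε := Real.sqrt_le_iff.2 ⟨by positivity, by nlinarith⟩
  have hquad : (x - ε) * S ≤ x ^ 2 := by
    rcases le_total x ε with h | h <;> nlinarith
  rw [div_le_iff₀ hS]
  nlinarith [mul_le_mul_of_nonneg_left hxS ha]

theorem norm_add_integral_norm_le_of_inner_deriv_add_norm_sq_le {f f' : ℝ → H} {A : ℝ → ℝ}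
    {a b : ℝ} (hab : a ≤ b) (hf : ContinuousOn f (Icc a b))
    (hf' : ∀ s ∈ Ioo a b, HasDerivAt f (f' s) s) (hA : IntervalIntegrable A volume a b)
    (hA0 : ∀ s ∈ Ioo a b, 0 ≤ A s)
    (hineq : ∀ s ∈ Ioo a b, inner ℝ (f' s) (f s) + ‖f s‖ ^ 2 ≤ A s * ‖f s‖) :
    ‖f b‖ + ∫ s in a..b, ‖f s‖ ≤ ‖f a‖ + ∫ s in a..b, A s := by
  have hfint : IntervalIntegrable (fun s => ‖f s‖) volume a b :=
    hf.norm.intervalIntegrable_of_Icc hab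
  have hreg : ∀ ε > 0, ‖f b‖ + ∫ s in a..b, ‖f s‖ ≤
      ‖f a‖ + (∫ s in a..b, A s) + ε * (1 + (b - a)) := by
    intro ε hε
    set S : ℝ → ℝ := fun r => √(‖f r‖ ^ 2 + ε ^ 2)
    have hFTC : S b - S a ≤ ∫ s in a..b, (A s - ‖f s‖ + ε) := by
      refine intervalIntegral.sub_le_integral_of_hasDeriv_right_of_le hab
        ((hf.norm.pow 2).add continuousOn_const).sqrt
        (fun s hs => (hasDerivAt_sqrt_norm_sq_add_sq (hf' s hs) hε.ne').hasDerivWithinAt)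
        ((intervalIntegrable_iff_integrableOn_Icc_of_le hab).1
          ((hA.sub hfint).add intervalIntegrable_const)) ?_
      intro s hs
      exact div_sqrt_sq_add_sq_le (norm_nonneg _) hε (hA0 s hs) (by linarith [hineq s hs])
    rw [intervalIntegral.integral_add (hA.sub hfint) intervalIntegrable_const,
      intervalIntegral.integral_sub hA hfint, intervalIntegral.integral_const,
      smul_eq_mul] at hFTC
    have hSb : ‖f b‖ ≤ S b := Real.le_sqrt_of_sq_le (by nlinarith)
    have hSa : S a ≤ ‖f a‖ + ε :=
      Real.sqrt_le_iff.2 ⟨by positivity, by nlinarith [norm_nonneg (f a)]⟩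
    nlinarith
  refine le_of_forall_pos_le_add fun δ hδ => ?_
  have hlen : 0 < 1 + (b - a) := by linarith
  simpa [div_mul_cancel₀ _ hlen.ne'] using hreg (δ / (1 + (b - a))) (by positivity)

theorem inner_block_add_norm_sq_le {w τ u c : H} {D : ℝ} (hD : 0 ≤ D)
    (htransport : -inner ℝ τ w ≤ 1 / 2 * D * ‖w‖ ^ 2) :
    inner ℝ (-τ - w + u - c) w + ‖w‖ ^ 2 ≤ (D * ‖w‖ + ‖u‖ + ‖c‖) * ‖w‖ := by
  have hexpand : inner ℝ (-τ - w + u - c) w + ‖w‖ ^ 2 =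
      -inner ℝ τ w + inner ℝ u w - inner ℝ c w := by
    simp only [inner_sub_left, inner_add_left, inner_neg_left, real_inner_self_eq_norm_sq]
    ring
  rw [hexpand]
  nlinarith [real_inner_le_norm u w, neg_le_of_abs_le (abs_real_inner_le_norm c w),
    mul_nonneg hD (sq_nonneg ‖w‖)]

end DampedEnergy

theorem stmt_13_general {H : Type*} [NormedAddCommGroup H] [InnerProductSpace ℝ H]
    (T : ℝ)
    (wj uj cm tw : ℝ → H) (Dv : ℝ → ℝ) (w0j : H)
    (hwj0 : wj 0 = w0j)
    (hcont : Continuous wj ∧ Continuous uj ∧ Continuous cm ∧ Continuous Dv)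
    (hDv : ∀ t ∈ Icc 0 T, 0 ≤ Dv t)
    (heq : ∀ t ∈ Icc 0 T, HasDerivAt wj (-(tw t) - wj t + uj t - cm t) t)
    (htransport : ∀ t ∈ Icc 0 T,
      -(inner ℝ (tw t) (wj t) : ℝ) ≤ (1 / 2) * Dv t * ‖wj t‖ ^ 2) :
    ∀ t ∈ Icc 0 T,
      ‖wj t‖ + ∫ τ in (0:ℝ)..t, ‖wj τ‖ ≤
        ‖w0j‖ + (∫ τ in (0:ℝ)..t, ‖cm τ‖) +
          (∫ τ in (0:ℝ)..t, Dv τ * ‖wj τ‖) + ∫ τ in (0:ℝ)..t, ‖uj τ‖ := by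
  obtain ⟨hwc, huc, hcc, hDc⟩ := hcont
  rintro t ⟨ht0, htT⟩
  have hsub : Ioo 0 t ⊆ Icc 0 T := Ioo_subset_Icc_self.trans (Icc_subset_Icc_right htT)
  have hDw : IntervalIntegrable (fun τ => Dv τ * ‖wj τ‖) volume 0 t :=
    (hDc.mul hwc.norm).intervalIntegrable 0 t
  have hu : IntervalIntegrable (fun τ => ‖uj τ‖) volume 0 t := huc.norm.intervalIntegrable 0 t
  have hc : IntervalIntegrable (fun τ => ‖cm τ‖) volume 0 t := hcc.norm.intervalIntegrable 0 t
  have henergy := norm_add_integral_norm_le_of_inner_deriv_add_norm_sq_le ht0 hwc.continuousOn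
    (fun s hs => heq s (hsub hs)) ((hDw.add hu).add hc)
    (fun s hs => by have := hDv s (hsub hs); positivity)
    (fun s hs => inner_block_add_norm_sq_le (hDv s (hsub hs)) (htransport s (hsub hs)))
  rw [intervalIntegral.integral_add (hDw.add hu) hc, intervalIntegral.integral_add hDw hu,
    hwj0] at henergy
  linarith

/-- A priori estimate for a dyadic block of the damped Euler equation
`∂ₜw + (w·∇)w + w - u = 0`. We work abstractly in the Hilbert space `H = L²`:
`wj t = Δ̇ⱼw(t)`, `uj t = Δ̇ⱼu(t)`, `cm t = [Δ̇ⱼ, w·∇]w(t)` is the commutator,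
`tw t = (w·∇)Δ̇ⱼw(t)` is the transport term and `Dv t = ‖div w(t)‖_{L∞}`.
The block equation reads `wj' = -(tw) - wj + uj - cm`, and the transport term
satisfies `-⟪tw, wj⟫ ≤ (1/2)‖div w‖_{L∞}‖wj‖²` (from integration by parts).
Then `‖wⱼ(t)‖ + ∫₀ᵗ‖wⱼ‖ ≤ ‖Δ̇ⱼw₀‖ + ∫₀ᵗ‖[Δ̇ⱼ,w·∇]w‖ + ∫₀ᵗ‖div w‖_{L∞}‖wⱼ‖ + ∫₀ᵗ‖uⱼ‖`. -/
theorem stmt_13 {H : Type*} [NormedAddCommGroup H] [InnerProductSpace ℝ H]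
    (T : ℝ) (hT : 0 < T)
    (wj uj cm tw : ℝ → H) (Dv : ℝ → ℝ) (w0j : H)
    (hwj0 : wj 0 = w0j)
    (hcont : Continuous wj ∧ Continuous uj ∧ Continuous cm ∧ Continuous Dv)
    (hDv : ∀ t ∈ Icc 0 T, 0 ≤ Dv t)
    (heq : ∀ t ∈ Icc 0 T, HasDerivAt wj (-(tw t) - wj t + uj t - cm t) t)
    (htransport : ∀ t ∈ Icc 0 T,
      -(inner ℝ (tw t) (wj t) : ℝ) ≤ (1 / 2) * Dv t * ‖wj t‖ ^ 2) :
    ∀ t ∈ Icc 0 T,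
      ‖wj t‖ + ∫ τ in (0:ℝ)..t, ‖wj τ‖ ≤
        ‖w0j‖ + (∫ τ in (0:ℝ)..t, ‖cm τ‖) +
          (∫ τ in (0:ℝ)..t, Dv τ * ‖wj τ‖) + ∫ τ in (0:ℝ)..t, ‖uj τ‖ :=
  stmt_13_general T wj uj cm tw Dv w0j hwj0 hcont hDv heq htransport
end
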